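/- Let Γ be a maximal SKHM-consistent set of L_Khm formulas. If a formula φ belongs to every Δ ∈ Φ_Γ, then Uφ belongs to every Δ ∈ Φ_Γ. -/
import Mathlib


/-- Formulas of the language L_Khm over a countable set of proposition
letters (represented by `ℕ`): `φ ::= p | ¬φ | (φ∧φ) | Khm(φ,φ,φ)`. -/
inductive Formula : Type
  | atom : ℕ → Formula
  | neg : Formula → Formula
  | and : Formula → Formula → Formula
  | khm : Formula → Formula → Formula → Formula
deriving DecidableEq

namespace Formula

/-- The falsum `⊥`, as a standard abbreviation. -/
def falsum : Formula := and (atom 0) (neg (atom 0))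

/-- The verum `⊤`. -/
def top : Formula := neg falsum

/-- Material implication, as a standard abbreviation. -/
def imp (φ ψ : Formula) : Formula := neg (and φ (neg ψ))

/-- Biimplication. -/
def biimp (φ ψ : Formula) : Formula := and (imp φ ψ) (imp ψ φ)

/-- The universal modality `Uφ := Khm(¬φ, ⊤, ⊥)`. -/
def U (φ : Formula) : Formula := khm (neg φ) top falsum

/-- Uniform substitution of formulas for proposition letters. -/
def subst (f : ℕ → Formula) : Formula → Formula
  | atom n => f n
  | neg φ => neg (subst f φ)
  | and φ ψ => and (subst f φ) (subst f ψ)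
  | khm φ χ ψ => khm (subst f φ) (subst f χ) (subst f ψ)

end Formula

/-- A model (ability map): a labelled transition system over action symbols `Act`,
with a set of states `S`, transitions `R`, and valuation `V`. -/
structure Model (Act : Type) where
  S : Type
  R : Act → S → S → Prop
  V : S → Set ℕ

namespace Model

variable {Act : Type} (M : Model Act)

/-- `M.bigStep σ s t` : `s →σ t`, i.e. `t` is reachable from `s` by executing the
sequence of actions `σ`. -/
def bigStep : List Act → M.S → M.S → Prop
  | [], s, t => s = t
  | a :: σ, s, t => ∃ u, M.R a s u ∧ bigStep σ u t

/-- `σ = a₁⋯aₙ` is strongly executable at `s` if for each `0 ≤ k < n`,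
`s →σ_k t` implies `t` has at least one `a_{k+1}`-successor. -/
def stronglyExec (σ : List Act) (s : M.S) : Prop :=
  ∀ k (h : k < σ.length) (t : M.S),
    M.bigStep (σ.take k) s t → ∃ u, M.R (σ.get ⟨k, h⟩) t u

/-- Satisfaction. `M.sat (Formula.khm ψ χ φ) s` holds iff there is `σ ∈ Act*`
such that for every `s'` with `M, s' ⊨ ψ`: `σ` is strongly `χ`-executable at `s'`
(strongly executable, and all strictly intermediate states satisfy `χ`) and
`M, t ⊨ φ` for all `t` with `s' →σ t`. -/
def sat : Formula → M.S → Prop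
  | .atom n, s => n ∈ M.V s
  | .neg φ, s => ¬ sat φ s
  | .and φ ψ, s => sat φ s ∧ sat ψ s
  | .khm ψ χ φ, s => ∃ σ : List Act, ∀ s', sat ψ s' →
      (M.stronglyExec σ s' ∧
        ∀ k, 0 < k → k < σ.length → ∀ t, M.bigStep (σ.take k) s' t → sat χ t) ∧
      (∀ t, M.bigStep σ s' t → sat φ t)

end Model

/-- A formula is valid (w.r.t. the class of all models over action symbols `Act`)
if it is satisfied at every state of every model. -/
def Valid (Act : Type) (φ : Formula) : Prop :=
  ∀ M : Model Act, Nonempty M.S → ∀ s : M.S, M.sat φ s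

/-- Boolean evaluation treating proposition letters and `Khm`-formulas as atoms. -/
def evalB (v : Formula → Bool) : Formula → Bool
  | .atom n => v (.atom n)
  | .neg φ => ! evalB v φ
  | .and φ ψ => evalB v φ && evalB v ψ
  | .khm ψ χ φ => v (.khm ψ χ φ)

/-- Propositional tautologies. -/
def Tautology (φ : Formula) : Prop := ∀ v, evalB v φ = true

open Formula in
/-- Derivability in the proof system SKHM. -/
inductive Deriv : Formula → Prop
  | taut {φ} : Tautology φ → Deriv φ
  | distU (p q) : Deriv (((U p).and (U (p.imp q))).imp (U q))
  | tU (p) : Deriv ((U p).imp p)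
  | fourKhmU (p o q) : Deriv ((khm p o q).imp (U (khm p o q)))
  | fiveKhmU (p o q) : Deriv ((neg (khm p o q)).imp (U (neg (khm p o q))))
  | empKhm (p q) : Deriv ((U (p.imp q)).imp (khm p falsum q))
  | compKhm (p o r q) :
      Deriv ((((khm p o r).and (khm r o q)).and (U (r.imp o))).imp (khm p o q))
  | oneKhm (p o q) :
      Deriv (((khm p o q).and (neg (khm p falsum q))).imp (khm p falsum o))
  | uKhm (p' p o o' q q') :
      Deriv (((((U (p'.imp p)).and (U (o.imp o'))).and (U (q.imp q'))).and
        (khm p o q)).imp (khm p' o' q'))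
  | mp {φ ψ} : Deriv (φ.imp ψ) → Deriv φ → Deriv ψ
  | necU {φ} : Deriv φ → Deriv (U φ)
  | sub {φ} (f : ℕ → Formula) : Deriv φ → Deriv (φ.subst f)

/-- Conjunction of a finite list of formulas. -/
def conjList : List Formula → Formula
  | [] => Formula.top
  | φ :: L => φ.and (conjList L)

/-- A set of formulas is SKHM-consistent if no finite conjunction of its
members has its negation derivable in SKHM. -/
def ConsistentSet (Γ : Set Formula) : Prop :=
  ∀ L : List Formula, (∀ φ ∈ L, φ ∈ Γ) → ¬ Deriv (Formula.neg (conjList L))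

/-- Maximal SKHM-consistent set. -/
def MCS (Γ : Set Formula) : Prop :=
  ConsistentSet Γ ∧ ∀ Δ, ConsistentSet Δ → Γ ⊆ Δ → Δ = Γ

/-- `Δ|Khm`: the positive `Khm`-formulas of `Δ`. -/
def khmPart (Δ : Set Formula) : Set Formula :=
  {θ ∈ Δ | ∃ ψ χ φ, θ = Formula.khm ψ χ φ}

/-- `Φ_Γ`: the set of all MCSs `Δ` with `Δ|Khm = Γ|Khm`. -/
def PhiGamma (Γ : Set Formula) : Set (Set Formula) :=
  {Δ | MCS Δ ∧ khmPart Δ = khmPart Γ}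

/-- Canonical action symbols: `⟨ψ,⊥,φ⟩` (`one ψ φ`) and `⟨χ^ψ,φ⟩` (`two χ ψ φ`). -/
inductive CanAct : Type
  | one : Formula → Formula → CanAct
  | two : Formula → Formula → Formula → CanAct
deriving DecidableEq

/-- The formula in the last component of a canonical action. -/
def CanAct.post : CanAct → Formula
  | .one _ φ => φ
  | .two _ _ φ => φ

/-- The canonical action set
`Σ_Γ = {⟨ψ,⊥,φ⟩ : Khm(ψ,⊥,φ) ∈ Γ} ∪ {⟨χ^ψ,φ⟩ : Khm(ψ,χ,φ) ∈ Γ, ¬Khm(ψ,⊥,φ) ∈ Γ}`. -/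
def SigmaGamma (Γ : Set Formula) : Set CanAct :=
  {a | (∃ ψ φ, a = CanAct.one ψ φ ∧ Formula.khm ψ Formula.falsum φ ∈ Γ) ∨
       (∃ χ ψ φ, a = CanAct.two χ ψ φ ∧ Formula.khm ψ χ φ ∈ Γ ∧
          Formula.neg (Formula.khm ψ Formula.falsum φ) ∈ Γ)}

/-- Canonical states: pairs `(Δ, χ^ψ)` (the marker `χ^ψ` is the pair `(χ, ψ)`)
with `χ ∈ Δ ∈ Φ_Γ`, and either `⟨χ^ψ,φ⟩ ∈ Σ_Γ` for some `φ`, or `⟨ψ,⊥,χ⟩ ∈ Σ_Γ`. -/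
def CanStates (Γ : Set Formula) : Set (Set Formula × Formula × Formula) :=
  {w | w.1 ∈ PhiGamma Γ ∧ w.2.1 ∈ w.1 ∧
       ((∃ φ, CanAct.two w.2.1 w.2.2 φ ∈ SigmaGamma Γ) ∨
        CanAct.one w.2.2 w.2.1 ∈ SigmaGamma Γ)}

/-- The canonical model `M^c_Γ` over the action set `Σ_Γ`. For a canonical state
`w`, `L(w) = w.1.1` and `R(w) = w.1.2`. -/
def canonicalModel (Γ : Set Formula) : Model {a : CanAct // a ∈ SigmaGamma Γ} where
  S := {w : Set Formula × Formula × Formula // w ∈ CanStates Γ}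
  R a w w' :=
    match a.1 with
    | CanAct.one ψ φ => ψ ∈ w.1.1 ∧ w'.1.2 = (φ, ψ)
    | CanAct.two χ ψ φ => w.1.2 = (χ, ψ) ∧ φ ∈ w'.1.1
  V w := {n | Formula.atom n ∈ w.1.1}

section Aux

open Formula

lemma evalB_conjList (v : Formula → Bool) (L : List Formula) :
    evalB v (conjList L) = L.all (evalB v) := by
  induction L with
  | nil =>
      simp only [conjList, Formula.top, Formula.falsum, evalB, List.all_nil]
      cases v (Formula.atom 0) <;> simp
  | cons a L ih => simp [conjList, evalB, ih]

lemma deriv_mp2 {a b c : Formula} (h : Tautology (a.imp (b.imp c)))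
    (ha : Deriv a) (hb : Deriv b) : Deriv c :=
  Deriv.mp (Deriv.mp (Deriv.taut h) ha) hb

lemma taut_cut {L L' : List Formula} {ψ : Formula}
    (h : ∀ x ∈ L, x ∈ L' ∨ x = ψ)
    (hL : Deriv (Formula.neg (conjList L))) :
    Deriv ((conjList L').imp (Formula.neg ψ)) := by
  refine Deriv.mp (Deriv.taut ?_) hL
  intro v
  have key : L'.all (evalB v) = true → evalB v ψ = true → L.all (evalB v) = true := by
    intro hb hc
    rw [List.all_eq_true] at hb ⊢
    intro x hx
    rcases h x hx with h1 | h1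
    · exact hb x h1
    · rw [h1]; exact hc
  simp only [Formula.imp, evalB, evalB_conjList]
  cases hA : L.all (evalB v) <;> cases hB : L'.all (evalB v) <;>
    cases hC : evalB v ψ <;> simp_all

lemma deriv_neg_append {L0 L' : List Formula} {ψ : Formula}
    (h0 : Deriv ((conjList L0).imp ψ))
    (h1 : Deriv ((conjList L').imp ψ.neg)) :
    Deriv (Formula.neg (conjList (L0 ++ L'))) := by
  refine deriv_mp2 ?_ h0 h1
  intro v
  simp only [Formula.imp, evalB, evalB_conjList, List.all_append]
  cases hA : L0.all (evalB v) <;> cases hB : L'.all (evalB v) <;>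
    cases hC : evalB v ψ <;> simp_all

lemma mcs_mem_from {Δ : Set Formula} (hΔ : MCS Δ) {ψ : Formula} (L0 : List Formula)
    (hL0 : ∀ x ∈ L0, x ∈ Δ) (hd : Deriv ((conjList L0).imp ψ)) : ψ ∈ Δ := by
  have hcons : ConsistentSet (insert ψ Δ) := by
    intro L hL hnL
    set L' := L.filter (fun x => decide (x ≠ ψ)) with hL'def
    have hmemL' : ∀ x ∈ L', x ∈ Δ := by
      intro x hx
      rw [hL'def, List.mem_filter] at hx
      rcases hL x hx.1 with h | h
      · exact absurd h (by simpa using hx.2)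
      · exact h
    have h1 : Deriv ((conjList L').imp ψ.neg) := by
      refine taut_cut (fun x hx => ?_) hnL
      by_cases hxψ : x = ψ
      · exact Or.inr hxψ
      · exact Or.inl (by rw [hL'def, List.mem_filter]; exact ⟨hx, by simp [hxψ]⟩)
    have h2 := deriv_neg_append hd h1
    exact hΔ.1 (L0 ++ L')
      (fun x hx => (List.mem_append.mp hx).elim (hL0 x) (hmemL' x)) h2
  have heq := hΔ.2 _ hcons (Set.subset_insert _ _)
  rw [← heq]; exact Set.mem_insert _ _

lemma mcs_mem_of_deriv {Δ : Set Formula} (hΔ : MCS Δ) {ψ : Formula}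
    (hd : Deriv ψ) : ψ ∈ Δ := by
  refine mcs_mem_from hΔ [] (by simp) ?_
  refine Deriv.mp (Deriv.taut ?_) hd
  intro v
  simp only [Formula.imp, evalB, evalB_conjList, List.all_nil]
  cases evalB v ψ <;> simp

lemma mcs_mp {Δ : Set Formula} (hΔ : MCS Δ) {a b : Formula}
    (h1 : a.imp b ∈ Δ) (h2 : a ∈ Δ) : b ∈ Δ := by
  refine mcs_mem_from hΔ [a.imp b, a] (by intro x hx; simp at hx; rcases hx with h|h <;> simp [h, h1, h2]) ?_
  refine Deriv.taut ?_
  intro v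
  simp only [Formula.imp, evalB, conjList, Formula.top, Formula.falsum]
  cases hA : evalB v a <;> cases hB : evalB v b <;> cases v (Formula.atom 0) <;> simp_all

lemma mcs_and_mem {Δ : Set Formula} (hΔ : MCS Δ) {a b : Formula}
    (h1 : a ∈ Δ) (h2 : b ∈ Δ) : a.and b ∈ Δ := by
  refine mcs_mem_from hΔ [a, b] (by intro x hx; simp at hx; rcases hx with h|h <;> simp [h, h1, h2]) ?_
  refine Deriv.taut ?_
  intro v
  simp only [Formula.imp, evalB, conjList, Formula.top, Formula.falsum]
  cases hA : evalB v a <;> cases hB : evalB v b <;> cases v (Formula.atom 0) <;> simp_all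

lemma mcs_not_both {Δ : Set Formula} (hΔ : MCS Δ) {ψ : Formula}
    (h1 : ψ ∈ Δ) (h2 : ψ.neg ∈ Δ) : False := by
  refine hΔ.1 [ψ, ψ.neg] (by intro x hx; simp at hx; rcases hx with h|h <;> simp [h, h1, h2]) ?_
  refine Deriv.taut ?_
  intro v
  simp only [evalB, conjList, Formula.top, Formula.falsum]
  cases hA : evalB v ψ <;> cases v (Formula.atom 0) <;> simp_all

lemma mcs_neg_mem {Δ : Set Formula} (hΔ : MCS Δ) {ψ : Formula}
    (h1 : ψ ∉ Δ) : ψ.neg ∈ Δ := by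
  have hnc : ¬ ConsistentSet (insert ψ Δ) := by
    intro hc
    exact h1 (by rw [← hΔ.2 _ hc (Set.subset_insert _ _)]; exact Set.mem_insert _ _)
  rw [ConsistentSet] at hnc
  push_neg at hnc
  obtain ⟨L, hLmem, hLd⟩ := hnc
  set L' := L.filter (fun x => decide (x ≠ ψ)) with hL'def
  have hmemL' : ∀ x ∈ L', x ∈ Δ := by
    intro x hx
    rw [hL'def, List.mem_filter] at hx
    rcases hLmem x hx.1 with h | h
    · exact absurd h (by simpa using hx.2)
    · exact h
  refine mcs_mem_from hΔ L' hmemL' ?_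
  refine taut_cut (fun x hx => ?_) hLd
  by_cases hxψ : x = ψ
  · exact Or.inr hxψ
  · exact Or.inl (by rw [hL'def, List.mem_filter]; exact ⟨hx, by simp [hxψ]⟩)

lemma lindenbaum {Θ : Set Formula} (h : ConsistentSet Θ) :
    ∃ Δ, MCS Δ ∧ Θ ⊆ Δ := by
  have hch : ∀ c ⊆ {Δ : Set Formula | ConsistentSet Δ}, IsChain (· ⊆ ·) c → c.Nonempty →
      ∃ ub ∈ {Δ : Set Formula | ConsistentSet Δ}, ∀ s ∈ c, s ⊆ ub := by
    intro c hcS hchain hcne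
    refine ⟨⋃₀ c, ?_, fun s hs => Set.subset_sUnion_of_mem hs⟩
    intro L hLmem hLd
    have key : ∀ L : List Formula, (∀ x ∈ L, x ∈ ⋃₀ c) → ∃ t ∈ c, ∀ x ∈ L, x ∈ t := by
      intro L
      induction L with
      | nil => exact fun _ => ⟨hcne.choose, hcne.choose_spec, by simp⟩
      | cons a L ih =>
          intro hm
          obtain ⟨t, htc, ht⟩ := ih (fun x hx => hm x (by simp [hx]))
          obtain ⟨s, hsc, has⟩ := hm a (by simp)
          rcases hchain.total hsc htc with hst | hts
          · refine ⟨t, htc, fun x hx => ?_⟩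
            rcases List.mem_cons.mp hx with hh | hh
            · exact hh ▸ hst has
            · exact ht x hh
          · refine ⟨s, hsc, fun x hx => ?_⟩
            rcases List.mem_cons.mp hx with hh | hh
            · exact hh ▸ has
            · exact hts (ht x hh)
    obtain ⟨t, htc, ht⟩ := key L hLmem
    exact hcS htc L ht hLd
  obtain ⟨m, hΘm, hmax⟩ := zorn_subset_nonempty {Δ | ConsistentSet Δ} hch Θ h
  refine ⟨m, ⟨hmax.1, fun Δ hΔc hsub => ?_⟩, hΘm⟩
  exact le_antisymm (hmax.2 hΔc hsub) hsub

lemma mcs_uMp {Δ : Set Formula} (hΔ : MCS Δ) {a b : Formula}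
    (h1 : Formula.U (a.imp b) ∈ Δ) (h2 : Formula.U a ∈ Δ) : Formula.U b ∈ Δ := by
  have hd : (((Formula.U a).and (Formula.U (a.imp b))).imp (Formula.U b)) ∈ Δ :=
    mcs_mem_of_deriv hΔ (Deriv.distU a b)
  exact mcs_mp hΔ hd (mcs_and_mem hΔ h2 h1)

lemma taut_top : Tautology Formula.top := by
  intro v
  simp only [Formula.top, Formula.falsum, evalB]
  cases v (Formula.atom 0) <;> simp

lemma mcs_uAnd {Δ : Set Formula} (hΔ : MCS Δ) {a b : Formula}
    (h1 : Formula.U a ∈ Δ) (h2 : Formula.U b ∈ Δ) : Formula.U (a.and b) ∈ Δ := by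
  have hd : Formula.U (a.imp (b.imp (a.and b))) ∈ Δ := by
    refine mcs_mem_of_deriv hΔ (Deriv.necU (Deriv.taut ?_))
    intro v
    simp only [Formula.imp, evalB]
    cases evalB v a <;> cases evalB v b <;> simp
  exact mcs_uMp hΔ (mcs_uMp hΔ hd h1) h2

lemma mcs_uConj {Δ : Set Formula} (hΔ : MCS Δ) (L : List Formula)
    (h : ∀ θ ∈ L, Formula.U θ ∈ Δ) : Formula.U (conjList L) ∈ Δ := by
  induction L with
  | nil => exact mcs_mem_of_deriv hΔ (Deriv.necU (Deriv.taut taut_top))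
  | cons a L ih =>
      exact mcs_uAnd hΔ (h a (by simp)) (ih (fun θ hθ => h θ (by simp [hθ])))

end Aux

/-- for an MCS `Γ`, if `φ` belongs to every `Δ ∈ Φ_Γ`,
then `Uφ` belongs to every `Δ ∈ Φ_Γ`. -/
theorem allPhiImplyUPhi (Γ : Set Formula) (hΓ : MCS Γ) (φ : Formula)
    (h : ∀ Δ ∈ PhiGamma Γ, φ ∈ Δ) : ∀ Δ ∈ PhiGamma Γ, Formula.U φ ∈ Δ := by
  intro Δ hΔmem
  obtain ⟨hΔmcs, hkhm⟩ := hΔmem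
  by_contra hUφ
  set S : Set Formula := {θ | θ ∈ Δ ∧
    ((∃ p o q, θ = Formula.khm p o q) ∨ (∃ p o q, θ = Formula.neg (Formula.khm p o q)))}
    with hSdef
  by_cases hc : ConsistentSet (insert (Formula.neg φ) S)
  · obtain ⟨Δ', hΔ'mcs, hsub⟩ := lindenbaum hc
    have hSΔ' : S ⊆ Δ' := fun x hx => hsub (Set.mem_insert_of_mem _ hx)
    have hkhmeq : khmPart Δ' = khmPart Δ := by
      ext θ
      constructor
      · rintro ⟨hθΔ', p, o, q, rfl⟩
        by_cases hθΔ : Formula.khm p o q ∈ Δ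
        · exact ⟨hθΔ, p, o, q, rfl⟩
        · have hn : (Formula.khm p o q).neg ∈ Δ := mcs_neg_mem hΔmcs hθΔ
          have : (Formula.khm p o q).neg ∈ Δ' :=
            hSΔ' ⟨hn, Or.inr ⟨p, o, q, rfl⟩⟩
          exact absurd (mcs_not_both hΔ'mcs hθΔ' this) (fun x => x)
      · rintro ⟨hθΔ, p, o, q, rfl⟩
        exact ⟨hSΔ' ⟨hθΔ, Or.inl ⟨p, o, q, rfl⟩⟩, p, o, q, rfl⟩
    have hΔ'Phi : Δ' ∈ PhiGamma Γ := ⟨hΔ'mcs, hkhmeq.trans hkhm⟩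
    have hφΔ' : φ ∈ Δ' := h Δ' hΔ'Phi
    exact mcs_not_both hΔ'mcs hφΔ' (hsub (Set.mem_insert _ _))
  · rw [ConsistentSet] at hc
    push_neg at hc
    obtain ⟨L, hLmem, hLd⟩ := hc
    set L' := L.filter (fun x => decide (x ≠ Formula.neg φ)) with hL'def
    have hmemL' : ∀ x ∈ L', x ∈ S := by
      intro x hx
      rw [hL'def, List.mem_filter] at hx
      rcases hLmem x hx.1 with h1 | h1
      · exact absurd h1 (by simpa using hx.2)
      · exact h1
    have h1 : Deriv ((conjList L').imp (Formula.neg φ).neg) := by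
      refine taut_cut (fun x hx => ?_) hLd
      by_cases hxψ : x = Formula.neg φ
      · exact Or.inr hxψ
      · exact Or.inl (by rw [hL'def, List.mem_filter]; exact ⟨hx, by simp [hxψ]⟩)
    have hUconj : Formula.U (conjList L') ∈ Δ := by
      refine mcs_uConj hΔmcs L' (fun θ hθ => ?_)
      obtain ⟨hθΔ, hshape⟩ := hmemL' θ hθ
      rcases hshape with ⟨p, o, q, rfl⟩ | ⟨p, o, q, rfl⟩
      · exact mcs_mp hΔmcs (mcs_mem_of_deriv hΔmcs (Deriv.fourKhmU p o q)) hθΔ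
      · exact mcs_mp hΔmcs (mcs_mem_of_deriv hΔmcs (Deriv.fiveKhmU p o q)) hθΔ
    have h3 : Formula.U ((conjList L').imp (Formula.neg φ).neg) ∈ Δ :=
      mcs_mem_of_deriv hΔmcs (Deriv.necU h1)
    have h4 : Formula.U ((Formula.neg φ).neg) ∈ Δ := mcs_uMp hΔmcs h3 hUconj
    have h5 : Formula.U (((Formula.neg φ).neg).imp φ) ∈ Δ := by
      refine mcs_mem_of_deriv hΔmcs (Deriv.necU (Deriv.taut ?_))
      intro v
      simp only [Formula.imp, evalB]
      cases evalB v φ <;> simp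
    exact hUφ (mcs_uMp hΔmcs h5 h4)
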